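/- Let σ > 0, μ ∈ ℝ, λ = 2μ/σ², let h : ℝ → ℝ be continuous, let d < D < U < u be reals, let K ≥ 0, L ≥ 0, k > 0, ℓ > 0, and let m ∈ ℝ. Define a₁ = ∫_d^D e^{λ(m−x)} dx, a₂ = ∫_U^u e^{λ(m−x)} dx, b₁ = −(2/σ²) ∫_d^D ∫_m^x e^{λ(y−x)} dy dx, b₂ = (2/σ²) ∫_U^u ∫_m^x e^{λ(y−x)} dy dx, c₁ = −(2/σ²) ∫_d^D ∫_m^x h(y) e^{λ(y−x)} dy dx, and c₂ = (2/σ²) ∫_U^u ∫_m^x h(y) e^{λ(y−x)} dy dx. Assume a₂b₁ + a₁b₂ ≠ 0 and set γ = (a₁(c₂ + L + ℓ(u−U)) + a₂(c₁ + K + k(D−d)))/(a₂b₁ + a₁b₂) and v = (b₁(c₂ + L + ℓ(u−U)) − b₂(c₁ + K + k(D−d)))/(a₂b₁ + a₁b₂). Define g(x) = v e^{λ(m−x)} + γ(2/σ²) ∫_m^x e^{λ(y−x)} dy − (2/σ²) ∫_m^x h(y) e^{λ(y−x)} dy and V(x) = ∫_m^x g(y) dy. Then V is twice continuously differentiable and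 satisfies (σ²/2)V''(x) + μV'(x) + h(x) = γ for every x ∈ [d, u], together with the boundary conditions V(d) − V(D) = K + k(D−d) and V(u) − V(U) = L + ℓ(u−U). -/

import Mathlib

open MeasureTheory Set Filter

noncomputable section

def A1 (lam m d D : ℝ) : ℝ := ∫ x in d..D, Real.exp (lam * (m - x))

def A2 (lam m U u : ℝ) : ℝ := ∫ x in U..u, Real.exp (lam * (m - x))

def B1 (σ lam m d D : ℝ) : ℝ :=
  -(2 / σ ^ 2) * ∫ x in d..D, (∫ y in m..x, Real.exp (lam * (y - x)))

def B2 (σ lam m U u : ℝ) : ℝ :=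
  (2 / σ ^ 2) * ∫ x in U..u, (∫ y in m..x, Real.exp (lam * (y - x)))

def C1 (σ lam m d D : ℝ) (h : ℝ → ℝ) : ℝ :=
  -(2 / σ ^ 2) * ∫ x in d..D, (∫ y in m..x, h y * Real.exp (lam * (y - x)))

def C2 (σ lam m U u : ℝ) (h : ℝ → ℝ) : ℝ :=
  (2 / σ ^ 2) * ∫ x in U..u, (∫ y in m..x, h y * Real.exp (lam * (y - x)))

def gee (σ lam m γ v : ℝ) (h : ℝ → ℝ) (x : ℝ) : ℝ :=
  v * Real.exp (lam * (m - x)) + γ * (2 / σ ^ 2) * (∫ y in m..x, Real.exp (lam * (y - x))) -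
    (2 / σ ^ 2) * ∫ y in m..x, h y * Real.exp (lam * (y - x))

def Vee (σ lam m γ v : ℝ) (h : ℝ → ℝ) (x : ℝ) : ℝ := ∫ y in m..x, gee σ lam m γ v h y

/-!
`g = V'` is obtained by variation of constants: it is the general solution of the
first order linear equation `(σ²/2) g' + μ g = γ - h`, so `V` solves the Poisson
equation for every `γ` and every integration constant `v`. Since `V(d) - V(D) = -∫_d^D g`
and `V(u) - V(U) = ∫_U^u g`, the two boundary conditions are affine equations in `(γ, v)`,
and the stated `γ` and `v` solve this 2 × 2 system by Cramer's rule.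
-/

theorem hasDerivAt_integral_mul_exp_sub {f : ℝ → ℝ} (hf : Continuous f) (lam m x : ℝ) :
    HasDerivAt (fun t => ∫ y in m..t, f y * Real.exp (lam * (y - t)))
      (f x - lam * ∫ y in m..x, f y * Real.exp (lam * (y - x))) x := by
  have hfactor : ∀ t, (∫ y in m..t, f y * Real.exp (lam * (y - t)))
      = Real.exp (-(lam * t)) * ∫ y in m..t, f y * Real.exp (lam * y) := fun t => by
    rw [← intervalIntegral.integral_const_mul]
    refine intervalIntegral.integral_congr fun y _ => ?_
    rw [show lam * (y - t) = -(lam * t) + lam * y by ring, Real.exp_add]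
    ring
  have hprim : HasDerivAt (fun t => ∫ y in m..t, f y * Real.exp (lam * y))
      (f x * Real.exp (lam * x)) x :=
    ((by fun_prop : Continuous fun y => f y * Real.exp (lam * y)).integral_hasStrictDerivAt
      m x).hasDerivAt
  have hexp : HasDerivAt (fun t => Real.exp (-(lam * t))) (-lam * Real.exp (-(lam * x))) x := by
    simpa [mul_comm] using ((hasDerivAt_id x).const_mul lam).neg.exp
  have hinv : Real.exp (-(lam * x)) * Real.exp (lam * x) = 1 := by
    rw [← Real.exp_add, neg_add_cancel, Real.exp_zero]
  simp only [hfactor]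
  exact (hexp.mul hprim).congr_deriv (by linear_combination f x * hinv)

theorem hasDerivAt_integral_exp_sub (lam m x : ℝ) :
    HasDerivAt (fun t => ∫ y in m..t, Real.exp (lam * (y - t)))
      (1 - lam * ∫ y in m..x, Real.exp (lam * (y - x))) x := by
  simpa using hasDerivAt_integral_mul_exp_sub (f := fun _ => 1) continuous_const lam m x

theorem solve_two_by_two {a₁ a₂ b₁ b₂ r₁ r₂ γ v : ℝ}
    (hΔ : a₂ * b₁ + a₁ * b₂ ≠ 0)
    (hγ : γ = (a₁ * r₂ + a₂ * r₁) / (a₂ * b₁ + a₁ * b₂))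
    (hv : v = (b₁ * r₂ - b₂ * r₁) / (a₂ * b₁ + a₁ * b₂)) :
    b₁ * γ - a₁ * v = r₁ ∧ a₂ * v + b₂ * γ = r₂ := by
  subst hγ hv
  rw [div_eq_mul_inv, div_eq_mul_inv]
  exact ⟨by linear_combination r₁ * mul_inv_cancel₀ hΔ,
    by linear_combination r₂ * mul_inv_cancel₀ hΔ⟩

section Poisson

variable (σ lam m γ v : ℝ) {h : ℝ → ℝ} (hcont : Continuous h)
include hcont

theorem hasDerivAt_gee (x : ℝ) :
    HasDerivAt (gee σ lam m γ v h)
      (-lam * gee σ lam m γ v h x + 2 / σ ^ 2 * (γ - h x)) x := by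
  have hexp : HasDerivAt (fun t => Real.exp (lam * (m - t)))
      (-lam * Real.exp (lam * (m - x))) x := by
    simpa [mul_comm] using (((hasDerivAt_id x).const_sub m).const_mul lam).exp
  exact (((hexp.const_mul v).add ((hasDerivAt_integral_exp_sub lam m x).const_mul _)).sub
    ((hasDerivAt_integral_mul_exp_sub hcont lam m x).const_mul _)).congr_deriv
      (by unfold gee; ring)

theorem continuous_gee : Continuous (gee σ lam m γ v h) :=
  continuous_iff_continuousAt.2 fun x => (hasDerivAt_gee σ lam m γ v hcont x).continuousAt

theorem deriv_gee :
    deriv (gee σ lam m γ v h) = fun x => -lam * gee σ lam m γ v h x + 2 / σ ^ 2 * (γ - h x) :=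
  funext fun x => (hasDerivAt_gee σ lam m γ v hcont x).deriv

theorem hasDerivAt_Vee (x : ℝ) : HasDerivAt (Vee σ lam m γ v h) (gee σ lam m γ v h x) x :=
  ((continuous_gee σ lam m γ v hcont).integral_hasStrictDerivAt m x).hasDerivAt

theorem deriv_Vee : deriv (Vee σ lam m γ v h) = gee σ lam m γ v h :=
  funext fun x => (hasDerivAt_Vee σ lam m γ v hcont x).deriv

theorem contDiff_two_Vee : ContDiff ℝ 2 (Vee σ lam m γ v h) := by
  have hg := continuous_gee σ lam m γ v hcont
  rw [show (2 : WithTop ℕ∞) = 1 + 1 from rfl, contDiff_succ_iff_deriv,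
    deriv_Vee σ lam m γ v hcont, contDiff_one_iff_deriv, deriv_gee σ lam m γ v hcont]
  exact ⟨fun x => (hasDerivAt_Vee σ lam m γ v hcont x).differentiableAt, by simp,
    fun x => (hasDerivAt_gee σ lam m γ v hcont x).differentiableAt, by fun_prop⟩

theorem Vee_poisson_equation {μ : ℝ} (hσ : σ ≠ 0) (hlam : lam = 2 * μ / σ ^ 2) (x : ℝ) :
    σ ^ 2 / 2 * deriv (deriv (Vee σ lam m γ v h)) x + μ * deriv (Vee σ lam m γ v h) x + h x
      = γ := by
  rw [deriv_Vee σ lam m γ v hcont, deriv_gee σ lam m γ v hcont, hlam]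
  field_simp
  ring

theorem integral_gee (a b : ℝ) :
    ∫ x in a..b, gee σ lam m γ v h x =
      v * (∫ x in a..b, Real.exp (lam * (m - x))) +
      γ * (2 / σ ^ 2) * (∫ x in a..b, ∫ y in m..x, Real.exp (lam * (y - x))) -
      2 / σ ^ 2 * ∫ x in a..b, ∫ y in m..x, h y * Real.exp (lam * (y - x)) := by
  have hI₁ : Continuous fun x => ∫ y in m..x, Real.exp (lam * (y - x)) :=
    continuous_iff_continuousAt.2 fun x => (hasDerivAt_integral_exp_sub lam m x).continuousAt
  have hI₂ : Continuous fun x => ∫ y in m..x, h y * Real.exp (lam * (y - x)) :=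
    continuous_iff_continuousAt.2 fun x =>
      (hasDerivAt_integral_mul_exp_sub hcont lam m x).continuousAt
  unfold gee
  rw [intervalIntegral.integral_sub (by apply Continuous.intervalIntegrable; fun_prop)
      (by apply Continuous.intervalIntegrable; fun_prop),
    intervalIntegral.integral_add (by apply Continuous.intervalIntegrable; fun_prop)
      (by apply Continuous.intervalIntegrable; fun_prop),
    intervalIntegral.integral_const_mul, intervalIntegral.integral_const_mul,
    intervalIntegral.integral_const_mul]

theorem Vee_sub_Vee (a b : ℝ) :
    Vee σ lam m γ v h b - Vee σ lam m γ v h a = ∫ x in a..b, gee σ lam m γ v h x :=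
  intervalIntegral.integral_interval_sub_left
    ((continuous_gee σ lam m γ v hcont).intervalIntegrable _ _)
    ((continuous_gee σ lam m γ v hcont).intervalIntegrable _ _)

theorem Vee_sub_Vee_lower (d D : ℝ) :
    Vee σ lam m γ v h d - Vee σ lam m γ v h D
      = B1 σ lam m d D * γ - A1 lam m d D * v - C1 σ lam m d D h := by
  rw [← neg_sub, Vee_sub_Vee σ lam m γ v hcont, integral_gee σ lam m γ v hcont, A1, B1, C1]
  ring

theorem Vee_sub_Vee_upper (U u : ℝ) :
    Vee σ lam m γ v h u - Vee σ lam m γ v h U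
      = A2 lam m U u * v + B2 σ lam m U u * γ - C2 σ lam m U u h := by
  rw [Vee_sub_Vee σ lam m γ v hcont, integral_gee σ lam m γ v hcont, A2, B2, C2]
  ring

end Poisson

theorem stmt17_general (σ μ : ℝ) (hσ : 0 < σ) (h : ℝ → ℝ) (hcont : Continuous h)
    (d D U u K L k ℓ m : ℝ) :
    ∀ lam : ℝ, lam = 2 * μ / σ ^ 2 →
    A2 lam m U u * B1 σ lam m d D + A1 lam m d D * B2 σ lam m U u ≠ 0 →
    ∀ γ v : ℝ,
      γ = (A1 lam m d D * (C2 σ lam m U u h + L + ℓ * (u - U)) +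
           A2 lam m U u * (C1 σ lam m d D h + K + k * (D - d))) /
          (A2 lam m U u * B1 σ lam m d D + A1 lam m d D * B2 σ lam m U u) →
      v = (B1 σ lam m d D * (C2 σ lam m U u h + L + ℓ * (u - U)) -
           B2 σ lam m U u * (C1 σ lam m d D h + K + k * (D - d))) /
          (A2 lam m U u * B1 σ lam m d D + A1 lam m d D * B2 σ lam m U u) →
      ContDiff ℝ 2 (Vee σ lam m γ v h) ∧
      (∀ x ∈ Set.Icc d u,
        σ ^ 2 / 2 * deriv (deriv (Vee σ lam m γ v h)) x +
          μ * deriv (Vee σ lam m γ v h) x + h x = γ) ∧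
      Vee σ lam m γ v h d - Vee σ lam m γ v h D = K + k * (D - d) ∧
      Vee σ lam m γ v h u - Vee σ lam m γ v h U = L + ℓ * (u - U) := by
  intro lam hlam hΔ γ v hγ hv
  obtain ⟨hlower, hupper⟩ := solve_two_by_two hΔ hγ hv
  refine ⟨contDiff_two_Vee σ lam m γ v hcont,
    fun x _ => Vee_poisson_equation σ lam m γ v hcont hσ.ne' hlam x, ?_, ?_⟩
  · rw [Vee_sub_Vee_lower σ lam m γ v hcont]
    linarith
  · rw [Vee_sub_Vee_upper σ lam m γ v hcont]
    linarith

theorem stmt17 (σ μ : ℝ) (hσ : 0 < σ) (h : ℝ → ℝ) (hcont : Continuous h)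
    (d D U u K L k ℓ m : ℝ) (hdD : d < D) (hDU : D < U) (hUu : U < u)
    (hK : 0 ≤ K) (hL : 0 ≤ L) (hk : 0 < k) (hl : 0 < ℓ) :
    ∀ lam : ℝ, lam = 2 * μ / σ ^ 2 →
    A2 lam m U u * B1 σ lam m d D + A1 lam m d D * B2 σ lam m U u ≠ 0 →
    ∀ γ v : ℝ,
      γ = (A1 lam m d D * (C2 σ lam m U u h + L + ℓ * (u - U)) +
           A2 lam m U u * (C1 σ lam m d D h + K + k * (D - d))) /
          (A2 lam m U u * B1 σ lam m d D + A1 lam m d D * B2 σ lam m U u) →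
      v = (B1 σ lam m d D * (C2 σ lam m U u h + L + ℓ * (u - U)) -
           B2 σ lam m U u * (C1 σ lam m d D h + K + k * (D - d))) /
          (A2 lam m U u * B1 σ lam m d D + A1 lam m d D * B2 σ lam m U u) →
      ContDiff ℝ 2 (Vee σ lam m γ v h) ∧
      (∀ x ∈ Set.Icc d u,
        σ ^ 2 / 2 * deriv (deriv (Vee σ lam m γ v h)) x +
          μ * deriv (Vee σ lam m γ v h) x + h x = γ) ∧
      Vee σ lam m γ v h d - Vee σ lam m γ v h D = K + k * (D - d) ∧
      Vee σ lam m γ v h u - Vee σ lam m γ v h U = L + ℓ * (u - U) :=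
  stmt17_general σ μ hσ h hcont d D U u K L k ℓ m
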